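/- Let α, β > 0 and γ = 0, and let (u,f) ∈ X be a minimizer of I(u,f) = ∫₀^∞ [2 u'² + (1−u²)²/r² + α r² f'² + αβ f² u²] dr over X which solves u'' = (αβ/2) f² u + u(u²−1)/r² and (r² f')' = β f u² on (0,∞) with 0 < u(r) < 1 and 0 < f(r) < 1 for all r > 0. Then f'(r) > 0 for all r > 0 (f strictly increases) and u is strictly decreasing on (0,∞). -/

import Mathlib

/-!
Since `(r² f')' = β f u² > 0`, the function `r² f'` is strictly increasing; if `f' c ≤ 0`, then
`f' < 0` on `(0, c)`, so `f` decreases there from its limit `0` at the origin, contradicting `f > 0`.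

Write the `u`-equation as `u'' = u Q` with `Q = αβ f² / 2 + (u² - 1) / r²`. If `u' c > 0`, the
limits `u(0⁺) = 1` and `u(∞) = 0` produce an interior local minimum `r₀ < c` and an interior local
maximum `r₁ > c` with `u r₀ < u r₁`. Then `Q r₀ ≥ 0 ≥ Q r₁`, whereas `Q r₀ < Q r₁` because `f`, `u`
and `r` all increase from `r₀` to `r₁` and `u² - 1 < 0`. Hence `u' ≤ 0`, and a zero `c` of `u'` would be
a local maximum of `u'` at which `(u'')' = u (αβ f f' + 2 (1 - u²) / r³) > 0`, which is impossible.
-/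

open MeasureTheory Filter Set Topology

noncomputable section

/-- `g` is absolutely continuous on every compact subinterval of `(0,∞)`,
with almost-everywhere derivative `g'`. -/
def LocAC (g g' : ℝ → ℝ) : Prop :=
  ∀ a b : ℝ, 0 < a → a ≤ b →
    IntervalIntegrable g' volume a b ∧ g b - g a = ∫ t in a..b, g' t

/-- The integrand of the `γ = 0` energy functional
`I(u,f) = ∫₀^∞ [2 u'² + (1−u²)²/r² + α r² f'² + αβ f² u²] dr`. -/
def dmIntegrand0 (α β : ℝ) (u u' f f' : ℝ → ℝ) (r : ℝ) : ℝ :=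
  2 * u' r ^ 2 + (1 - u r ^ 2) ^ 2 / r ^ 2
    + α * r ^ 2 * f' r ^ 2 + α * β * f r ^ 2 * u r ^ 2

/-- The `γ = 0` energy `I(u,f)`. -/
def dmEnergy0 (α β : ℝ) (u u' f f' : ℝ → ℝ) : ℝ :=
  ∫ r in Ioi (0 : ℝ), dmIntegrand0 α β u u' f f' r

/-- The admissible class `X` for `γ = 0`. -/
def dmAdm0 (α β : ℝ) (u u' f f' : ℝ → ℝ) : Prop :=
  LocAC u u' ∧ LocAC f f' ∧
    IntegrableOn (dmIntegrand0 α β u u' f f') (Ioi 0) ∧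
    Tendsto u (𝓝[>] (0 : ℝ)) (𝓝 1) ∧ Tendsto f (𝓝[>] (0 : ℝ)) (𝓝 0) ∧
    Tendsto u atTop (𝓝 0) ∧ Tendsto f atTop (𝓝 1)

section Calculus

variable {f f' : ℝ → ℝ} {x d : ℝ}

theorem strictMonoOn_of_hasDerivAt_pos {D : Set ℝ} (hD : Convex ℝ D)
    (hf : ∀ x ∈ D, HasDerivAt f (f' x) x) (hf' : ∀ x ∈ interior D, 0 < f' x) :
    StrictMonoOn f D :=
  strictMonoOn_of_hasDerivWithinAt_pos hD (fun x hx => (hf x hx).continuousAt.continuousWithinAt)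
    (fun x hx => (hf x (interior_subset hx)).hasDerivWithinAt) hf'

theorem strictAntiOn_of_hasDerivAt_neg {D : Set ℝ} (hD : Convex ℝ D)
    (hf : ∀ x ∈ D, HasDerivAt f (f' x) x) (hf' : ∀ x ∈ interior D, f' x < 0) :
    StrictAntiOn f D :=
  strictAntiOn_of_hasDerivWithinAt_neg hD (fun x hx => (hf x hx).continuousAt.continuousWithinAt)
    (fun x hx => (hf x (interior_subset hx)).hasDerivWithinAt) hf'

theorem HasDerivAt.eventually_nhdsLT_lt (hf : HasDerivAt f d x) (hd : 0 < d) :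
    ∀ᶠ y in 𝓝[<] x, f y < f x := by
  filter_upwards [((hasDerivAt_iff_tendsto_slope.mp hf).mono_left (nhdsLT_le_nhdsNE x)).eventually
    (eventually_gt_nhds hd), self_mem_nhdsWithin] with y hy hyx
  exact (slope_pos_iff_gt hyx).mp hy

theorem HasDerivAt.eventually_nhdsGT_gt (hf : HasDerivAt f d x) (hd : 0 < d) :
    ∀ᶠ y in 𝓝[>] x, f x < f y := by
  filter_upwards [((hasDerivAt_iff_tendsto_slope.mp hf).mono_left (nhdsGT_le_nhdsNE x)).eventually
    (eventually_gt_nhds hd), self_mem_nhdsWithin] with y hy hyx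
  exact (slope_pos_iff hyx).mp hy

theorem IsLocalMin.nonneg_of_hasDerivAt_deriv (h : IsLocalMin f x)
    (hf : ∀ᶠ y in 𝓝 x, HasDerivAt f (f' y) y) (hf' : HasDerivAt f' d x) : 0 ≤ d := by
  have hdd : deriv (deriv f) x = d :=
    (hf'.congr_of_eventuallyEq (hf.mono fun y hy => hy.deriv)).deriv
  by_contra! hd
  -- the second derivative test makes `x` also a local maximum, so `f` is locally constant
  have hmax := isLocalMax_of_deriv_deriv_neg (hdd ▸ hd) h.deriv_eq_zero
    hf.self_of_nhds.continuousAt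
  have hconst : f =ᶠ[𝓝 x] fun _ => f x :=
    (h.and hmax).mono fun y hy => le_antisymm hy.2 hy.1
  have hzero : deriv (deriv f) x = 0 := by
    rw [hconst.deriv.deriv_eq]
    simp
  linarith

theorem IsLocalMax.nonpos_of_hasDerivAt_deriv (h : IsLocalMax f x)
    (hf : ∀ᶠ y in 𝓝 x, HasDerivAt f (f' y) y) (hf' : HasDerivAt f' d x) : d ≤ 0 := by
  have := h.neg.nonneg_of_hasDerivAt_deriv (hf.mono fun y hy => hy.neg) hf'.neg
  linarith

end Calculus

section Extrema

variable {g : ℝ → ℝ} {a b x : ℝ}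

theorem exists_isLocalMin_mem_Ioo_le (hg : ContinuousOn g (Icc a b)) (hx : x ∈ Icc a b)
    (ha : g x < g a) (hb : g x < g b) : ∃ r ∈ Ioo a b, IsLocalMin g r ∧ g r ≤ g x := by
  obtain ⟨r, hr, hmin⟩ := isCompact_Icc.exists_isMinOn_mem_subset hg hx fun z hz => by
    rw [Icc_sdiff_Ioo_same (hx.1.trans hx.2)] at hz
    rcases hz with rfl | rfl <;> assumption
  exact ⟨r, hr, hmin.isLocalMin (Icc_mem_nhds hr.1 hr.2), hmin hx⟩

theorem exists_isLocalMax_mem_Ioo_ge (hg : ContinuousOn g (Icc a b)) (hx : x ∈ Icc a b)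
    (ha : g a < g x) (hb : g b < g x) : ∃ r ∈ Ioo a b, IsLocalMax g r ∧ g x ≤ g r := by
  obtain ⟨r, hr, hmin, hle⟩ :=
    exists_isLocalMin_mem_Ioo_le (g := fun y => -g y) hg.neg hx (neg_lt_neg ha) (neg_lt_neg hb)
  exact ⟨r, hr, by simpa using hmin.neg, neg_le_neg_iff.mp hle⟩

theorem AntitoneOn.le_of_tendsto_nhdsGT {L : ℝ} (hg : AntitoneOn g (Ioc a b)) (hab : a < b)
    (hL : Tendsto g (𝓝[>] a) (𝓝 L)) : g b ≤ L :=
  ge_of_tendsto hL <| by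
    filter_upwards [Ioo_mem_nhdsGT hab] with s hs
    exact hg ⟨hs.1, hs.2.le⟩ ⟨hab, le_rfl⟩ hs.2.le

theorem exists_isLocalMin_isLocalMax_of_hasDerivAt_pos {c d L₀ L₁ : ℝ}
    (hg : ContinuousOn g (Ioi a)) (hc : a < c) (hd : HasDerivAt g d c) (hd₀ : 0 < d)
    (h₀ : Tendsto g (𝓝[>] a) (𝓝 L₀)) (h₁ : Tendsto g atTop (𝓝 L₁))
    (hL₀ : g c < L₀) (hL₁ : L₁ < g c) :
    ∃ r₀ r₁, a < r₀ ∧ r₀ < r₁ ∧ IsLocalMin g r₀ ∧ IsLocalMax g r₁ ∧ g r₀ < g r₁ := by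
  obtain ⟨ε, hεg, hε⟩ :=
    ((h₀.eventually (eventually_gt_nhds hL₀)).and (Ioo_mem_nhdsGT hc)).exists
  obtain ⟨x₀, hx₀g, hx₀⟩ := ((hd.eventually_nhdsLT_lt hd₀).and (Ioo_mem_nhdsLT hε.2)).exists
  obtain ⟨x₁, hx₁g, hx₁⟩ := ((hd.eventually_nhdsGT_gt hd₀).and self_mem_nhdsWithin).exists
  obtain ⟨R, hRg, hR⟩ :=
    ((h₁.eventually (eventually_lt_nhds hL₁)).and (eventually_gt_atTop x₁)).exists
  obtain ⟨r₀, hr₀, hmin, hr₀g⟩ := exists_isLocalMin_mem_Ioo_le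
    (hg.mono (Icc_subset_Ioi_iff hε.2.le |>.mpr hε.1)) ⟨hx₀.1.le, hx₀.2.le⟩ (by linarith) hx₀g
  obtain ⟨r₁, hr₁, hmax, hr₁g⟩ := exists_isLocalMax_mem_Ioo_ge
    (hg.mono (Icc_subset_Ioi_iff (hx₁.le.trans hR.le) |>.mpr hc)) ⟨hx₁.le, hR.le⟩ hx₁g
    (by linarith)
  exact ⟨r₀, r₁, hε.1.trans hr₀.1, hr₀.2.trans hr₁.1, hmin, hmax, by linarith⟩

end Extrema

theorem pos_of_strictMonoOn_mul_deriv {f f' w : ℝ → ℝ} {L : ℝ}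
    (hf : ∀ r ∈ Ioi 0, HasDerivAt f (f' r) r) (hw : ∀ r ∈ Ioi 0, 0 < w r)
    (hmono : StrictMonoOn (fun r => w r * f' r) (Ioi 0))
    (hL : Tendsto f (𝓝[>] 0) (𝓝 L)) (hgt : ∀ r ∈ Ioi 0, L < f r) :
    ∀ r ∈ Ioi 0, 0 < f' r := by
  intro c hc
  by_contra! hfc
  have hneg : ∀ r ∈ Ioo 0 c, f' r < 0 := fun r hr => by
    have hlt : w r * f' r < w c * f' c := hmono hr.1 hc hr.2
    have hc_nonpos : w c * f' c ≤ 0 := mul_nonpos_of_nonneg_of_nonpos (hw c hc).le hfc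
    exact neg_of_mul_neg_right (by linarith) (hw r hr.1).le
  have hanti : StrictAntiOn f (Ioc 0 c) := strictAntiOn_of_hasDerivAt_neg (convex_Ioc 0 c)
    (fun r hr => hf r hr.1) (by rwa [interior_Ioc])
  linarith [hanti.antitoneOn.le_of_tendsto_nhdsGT hc hL, hgt c hc]

section Potential

/-- The equation for `u` reads `u'' = u * dmPotential α β u f`. -/
def dmPotential (α β : ℝ) (u f : ℝ → ℝ) (r : ℝ) : ℝ :=
  α * β / 2 * f r ^ 2 + (u r ^ 2 - 1) / r ^ 2

variable {α β : ℝ} {u u' f f' : ℝ → ℝ}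

theorem dmPotential_lt (hαβ : 0 ≤ α * β) {r₀ r₁ : ℝ} (hr₀ : 0 < r₀) (hr : r₀ ≤ r₁)
    (hu₀ : 0 ≤ u r₀) (hu : u r₀ < u r₁) (hu₁ : u r₁ ≤ 1) (hf₀ : 0 ≤ f r₀) (hf : f r₀ ≤ f r₁) :
    dmPotential α β u f r₀ < dmPotential α β u f r₁ := by
  have hr₁ : 0 < r₁ := hr₀.trans_le hr
  have hsq : (u r₀ ^ 2 - 1) / r₀ ^ 2 < (u r₁ ^ 2 - 1) / r₀ ^ 2 :=
    div_lt_div_of_pos_right (by nlinarith) (by positivity)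
  have hrad : (u r₁ ^ 2 - 1) / r₀ ^ 2 ≤ (u r₁ ^ 2 - 1) / r₁ ^ 2 := by
    rw [div_le_div_iff₀ (by positivity) (by positivity)]
    nlinarith [mul_le_mul hr hr hr₀.le hr₁.le, mul_le_mul hu₁ hu₁ (hu₀.trans hu.le) zero_le_one]
  have hfsq : α * β / 2 * f r₀ ^ 2 ≤ α * β / 2 * f r₁ ^ 2 := by gcongr
  unfold dmPotential
  linarith

theorem hasDerivAt_mul_dmPotential_of_hasDerivAt_zero {r d : ℝ} (hu : HasDerivAt u 0 r)
    (hf : HasDerivAt f d r) (hr : r ≠ 0) :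
    HasDerivAt (fun s => u s * dmPotential α β u f s)
      (u r * (α * β * f r * d + 2 * (1 - u r ^ 2) / r ^ 3)) r := by
  have hQ : HasDerivAt (dmPotential α β u f)
      (α * β * f r * d + 2 * (1 - u r ^ 2) / r ^ 3) r := by
    have := ((hf.fun_pow 2).const_mul (α * β / 2)).add
      (((hu.fun_pow 2).sub_const 1).div (hasDerivAt_pow 2 r) (pow_ne_zero 2 hr))
    refine this.congr_deriv ?_
    field_simp
    ring
  refine (hu.mul hQ).congr_deriv ?_
  ring

theorem nonpos_of_hasDerivAt_mul_dmPotential (hαβ : 0 ≤ α * β)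
    (hu : ∀ r ∈ Ioi 0, HasDerivAt u (u' r) r)
    (hu' : ∀ r ∈ Ioi 0, HasDerivAt u' (u r * dmPotential α β u f r) r)
    (hf : MonotoneOn f (Ioi 0)) (hf₀ : ∀ r ∈ Ioi 0, 0 ≤ f r)
    (hu_pos : ∀ r ∈ Ioi 0, 0 < u r) (hu_lt : ∀ r ∈ Ioi 0, u r < 1)
    (hu_zero : Tendsto u (𝓝[>] 0) (𝓝 1)) (hu_top : Tendsto u atTop (𝓝 0)) :
    ∀ r ∈ Ioi 0, u' r ≤ 0 := by
  intro c hc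
  by_contra! hpos
  obtain ⟨r₀, r₁, hr₀, hr, hmin, hmax, hlt⟩ := exists_isLocalMin_isLocalMax_of_hasDerivAt_pos
    (fun x hx => (hu x hx).continuousAt.continuousWithinAt) hc (hu c hc) hpos hu_zero hu_top
    (hu_lt c hc) (hu_pos c hc)
  have hr₁ : r₁ ∈ Ioi 0 := hr₀.trans hr
  have hQ₀ : 0 ≤ dmPotential α β u f r₀ := nonneg_of_mul_nonneg_right
    (hmin.nonneg_of_hasDerivAt_deriv (eventually_of_mem (Ioi_mem_nhds hr₀) hu) (hu' r₀ hr₀))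
    (hu_pos r₀ hr₀)
  have hQ₁ : dmPotential α β u f r₁ ≤ 0 := nonpos_of_mul_nonpos_right
    (hmax.nonpos_of_hasDerivAt_deriv (eventually_of_mem (Ioi_mem_nhds hr₁) hu) (hu' r₁ hr₁))
    (hu_pos r₁ hr₁)
  have hQ := dmPotential_lt hαβ hr₀ hr.le (hu_pos r₀ hr₀).le hlt (hu_lt r₁ hr₁).le (hf₀ r₀ hr₀)
    (hf hr₀ hr₁ hr.le)
  linarith

theorem neg_of_hasDerivAt_mul_dmPotential (hαβ : 0 ≤ α * β)
    (hu : ∀ r ∈ Ioi 0, HasDerivAt u (u' r) r)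
    (hu' : ∀ r ∈ Ioi 0, HasDerivAt u' (u r * dmPotential α β u f r) r)
    (hf : ∀ r ∈ Ioi 0, HasDerivAt f (f' r) r) (hf₀ : ∀ r ∈ Ioi 0, 0 ≤ f r)
    (hf'₀ : ∀ r ∈ Ioi 0, 0 ≤ f' r) (hu_pos : ∀ r ∈ Ioi 0, 0 < u r)
    (hu_lt : ∀ r ∈ Ioi 0, u r < 1) (hu'_nonpos : ∀ r ∈ Ioi 0, u' r ≤ 0) :
    ∀ r ∈ Ioi 0, u' r < 0 := by
  intro c hc
  refine (hu'_nonpos c hc).lt_of_ne fun hcrit => ?_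
  have hmax : IsLocalMax u' c :=
    eventually_of_mem (Ioi_mem_nhds hc) fun r hr => hcrit ▸ hu'_nonpos r hr
  have hD_nonpos := hmax.nonpos_of_hasDerivAt_deriv (eventually_of_mem (Ioi_mem_nhds hc) hu')
    (hasDerivAt_mul_dmPotential_of_hasDerivAt_zero (α := α) (β := β) (hcrit ▸ hu c hc)
      (hf c hc) hc.ne')
  have hD_pos : 0 < u c * (α * β * f c * f' c + 2 * (1 - u c ^ 2) / c ^ 3) := by
    have hc₀ : (0 : ℝ) < c := hc
    have hu₀ := hu_pos c hc
    have hu₁ : 0 < 1 - u c ^ 2 := by nlinarith [hu_lt c hc]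
    have := hf₀ c hc
    have := hf'₀ c hc
    positivity
  linarith
end Potential

theorem minimizer_monotonicity_general (α β : ℝ) (hα : 0 < α) (hβ : 0 < β)
    (u u' f f' : ℝ → ℝ)
    (hadm : dmAdm0 α β u u' f f')
    (hode : ∀ r : ℝ, 0 < r →
      HasDerivAt u (u' r) r ∧ HasDerivAt f (f' r) r ∧
      HasDerivAt u' (α * β / 2 * f r ^ 2 * u r + u r * (u r ^ 2 - 1) / r ^ 2) r ∧
      HasDerivAt (fun s : ℝ => s ^ 2 * f' s) (β * f r * u r ^ 2) r)
    (hbounds : ∀ r : ℝ, 0 < r → 0 < u r ∧ u r < 1 ∧ 0 < f r ∧ f r < 1) :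
    (∀ r : ℝ, 0 < r → 0 < f' r) ∧ StrictAntiOn u (Ioi 0) := by
  obtain ⟨-, -, -, hu_zero, hf_zero, hu_top, -⟩ := hadm
  have hαβ : 0 ≤ α * β := by positivity
  have hu : ∀ r ∈ Ioi (0 : ℝ), HasDerivAt u (u' r) r := fun r hr => (hode r hr).1
  have hf : ∀ r ∈ Ioi (0 : ℝ), HasDerivAt f (f' r) r := fun r hr => (hode r hr).2.1
  have hu' : ∀ r ∈ Ioi (0 : ℝ), HasDerivAt u' (u r * dmPotential α β u f r) r := fun r hr => by
    convert (hode r hr).2.2.1 using 1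
    unfold dmPotential
    ring
  have hu_pos : ∀ r ∈ Ioi (0 : ℝ), 0 < u r := fun r hr => (hbounds r hr).1
  have hu_lt : ∀ r ∈ Ioi (0 : ℝ), u r < 1 := fun r hr => (hbounds r hr).2.1
  have hf_pos : ∀ r ∈ Ioi (0 : ℝ), 0 < f r := fun r hr => (hbounds r hr).2.2.1
  have hflux : StrictMonoOn (fun r => r ^ 2 * f' r) (Ioi 0) :=
    strictMonoOn_of_hasDerivAt_pos (convex_Ioi 0) (fun r hr => (hode r hr).2.2.2) fun r hr => by
      rw [interior_Ioi] at hr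
      have := hu_pos r hr
      have := hf_pos r hr
      positivity
  have hf'_pos : ∀ r ∈ Ioi (0 : ℝ), 0 < f' r :=
    pos_of_strictMonoOn_mul_deriv hf (fun r hr => pow_pos hr 2) hflux hf_zero hf_pos
  have hf_mono : StrictMonoOn f (Ioi 0) :=
    strictMonoOn_of_hasDerivAt_pos (convex_Ioi 0) hf (by rwa [interior_Ioi])
  have hf₀ : ∀ r ∈ Ioi (0 : ℝ), 0 ≤ f r := fun r hr => (hf_pos r hr).le
  have hu'_neg := neg_of_hasDerivAt_mul_dmPotential hαβ hu hu' hf hf₀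
    (fun r hr => (hf'_pos r hr).le) hu_pos hu_lt
    (nonpos_of_hasDerivAt_mul_dmPotential hαβ hu hu' hf_mono.monotoneOn hf₀ hu_pos hu_lt
      hu_zero hu_top)
  exact ⟨hf'_pos, strictAntiOn_of_hasDerivAt_neg (convex_Ioi 0) hu (by rwa [interior_Ioi])⟩

/-- an energy minimizer solving the `γ = 0` equations with
`0 < u < 1`, `0 < f < 1` has `f' > 0` on `(0,∞)` and `u` strictly decreasing. -/
theorem minimizer_monotonicity (α β : ℝ) (hα : 0 < α) (hβ : 0 < β)
    (u u' f f' : ℝ → ℝ)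
    (hadm : dmAdm0 α β u u' f f')
    (hmin : ∀ v v' g g' : ℝ → ℝ, dmAdm0 α β v v' g g' →
      dmEnergy0 α β u u' f f' ≤ dmEnergy0 α β v v' g g')
    (hode : ∀ r : ℝ, 0 < r →
      HasDerivAt u (u' r) r ∧ HasDerivAt f (f' r) r ∧
      HasDerivAt u' (α * β / 2 * f r ^ 2 * u r + u r * (u r ^ 2 - 1) / r ^ 2) r ∧
      HasDerivAt (fun s : ℝ => s ^ 2 * f' s) (β * f r * u r ^ 2) r)
    (hbounds : ∀ r : ℝ, 0 < r → 0 < u r ∧ u r < 1 ∧ 0 < f r ∧ f r < 1) :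
    (∀ r : ℝ, 0 < r → 0 < f' r) ∧ StrictAntiOn u (Ioi 0) :=
  minimizer_monotonicity_general α β hα hβ u u' f f' hadm hode hbounds
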